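/- arXiv:1307.7557 — 3 statements merged into one kernel-verified Lean document; each statement's English description precedes it below -/
import Mathlib

section
/- Let L be a finite distributive lattice with a cut edge (a,b). Then the join-meet ideal I_L of L equals I_{L1} + I_{L2}, where L1 = {c : c ≤ a} and L2 = {c : c ≥ b}, and these two ideals are generated by binomials in disjoint sets of variables. -/
open MvPolynomial

section Aux
variable {L : Type*} [Lattice L] [BoundedOrder L] [Fintype L]

omit [BoundedOrder L] in
lemma aux_mono (ρ : L → ℕ) (hcov : ∀ x y : L, x ⋖ y → ρ y = ρ x + 1) :
    ∀ x y : L, x < y → ρ x < ρ y := by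
  classical
  haveI : LocallyFiniteOrder L := Fintype.toLocallyFiniteOrder
  intro x y
  induction y using WellFoundedLT.induction with
  | ind y IH =>
    intro hxy
    obtain ⟨z, hxz, hzy⟩ := exists_le_covBy_of_lt hxy
    have h1 : ρ z < ρ y := by rw [hcov z y hzy]; omega
    rcases eq_or_lt_of_le hxz with rfl | h
    · exact h1
    · exact lt_trans (IH z hzy.lt h) h1

lemma aux_le_a (ρ : L → ℕ) (hcov : ∀ x y : L, x ⋖ y → ρ y = ρ x + 1)
    (a : L) (ha : ∀ c : L, ρ c = ρ a → c = a) :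
    ∀ n : ℕ, ∀ c : L, ρ c + n = ρ a → c ≤ a := by
  classical
  haveI : LocallyFiniteOrder L := Fintype.toLocallyFiniteOrder
  intro n
  induction n with
  | zero => intro c hc; exact le_of_eq (ha c (by omega))
  | succ n IH =>
    intro c hc
    have hct : c ≠ ⊤ := by
      rintro rfl
      have := aux_mono ρ hcov a ⊤ (lt_of_le_of_ne le_top (by rintro rfl; omega))
      omega
    obtain ⟨d, hcd, _⟩ := exists_covBy_le_of_lt (lt_of_le_of_ne le_top hct)
    have := hcov c d hcd
    exact le_trans hcd.le (IH d (by omega))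

lemma aux_ge_b (ρ : L → ℕ) (hbot : ρ ⊥ = 0) (hcov : ∀ x y : L, x ⋖ y → ρ y = ρ x + 1)
    (b : L) (hb : ∀ c : L, ρ c = ρ b → c = b) :
    ∀ n : ℕ, ∀ c : L, ρ b + n = ρ c → b ≤ c := by
  classical
  haveI : LocallyFiniteOrder L := Fintype.toLocallyFiniteOrder
  intro n
  induction n with
  | zero => intro c hc; exact le_of_eq (hb c (by omega)).symm
  | succ n IH =>
    intro c hc
    have hcb : c ≠ ⊥ := by
      rintro rfl
      have hbb : (⊥ : L) ≠ b := by rintro rfl; omega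
      have := aux_mono ρ hcov ⊥ b (lt_of_le_of_ne bot_le hbb)
      omega
    obtain ⟨d, _, hdc⟩ := exists_le_covBy_of_lt (lt_of_le_of_ne bot_le (Ne.symm hcb))
    have := hcov d c hdc
    exact le_trans (IH d (by omega)) hdc.le

end Aux

/-- Let `L` be a finite graded distributive lattice with a cut edge `(a, b)`.
Then the join-meet ideal `I_L` (generated by `x_u x_v - x_{u⊔v} x_{u⊓v}` for incomparable
`u, v`) equals `I_{L1} + I_{L2}`, where `L1 = {c : c ≤ a}` and `L2 = {c : b ≤ c}`;
moreover the generators of `I_{L1}` involve only variables from `L1`, those of `I_{L2}`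
only variables from `L2`, and `L1` and `L2` are disjoint. -/
theorem stmt2 {L : Type*} [DistribLattice L] [BoundedOrder L] [Fintype L]
    {K : Type*} [Field K]
    (ρ : L → ℕ) (hbot : ρ ⊥ = 0) (hcov : ∀ x y : L, x ⋖ y → ρ y = ρ x + 1)
    (a b : L) (hab : a ⋖ b)
    (ha : ∀ c : L, ρ c = ρ a → c = a) (hb : ∀ c : L, ρ c = ρ b → c = b)
    (IL I1 I2 : Ideal (MvPolynomial L K))
    (hIL : IL = Ideal.span {f | ∃ u v : L, ¬u ≤ v ∧ ¬v ≤ u ∧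
      f = X u * X v - X (u ⊔ v) * X (u ⊓ v)})
    (hI1 : I1 = Ideal.span {f | ∃ u v : L, u ≤ a ∧ v ≤ a ∧ ¬u ≤ v ∧ ¬v ≤ u ∧
      f = X u * X v - X (u ⊔ v) * X (u ⊓ v)})
    (hI2 : I2 = Ideal.span {f | ∃ u v : L, b ≤ u ∧ b ≤ v ∧ ¬u ≤ v ∧ ¬v ≤ u ∧
      f = X u * X v - X (u ⊔ v) * X (u ⊓ v)}) :
    IL = I1 + I2 ∧
    (∀ f ∈ {f : MvPolynomial L K | ∃ u v : L, u ≤ a ∧ v ≤ a ∧ ¬u ≤ v ∧ ¬v ≤ u ∧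
        f = X u * X v - X (u ⊔ v) * X (u ⊓ v)}, ↑f.vars ⊆ {c : L | c ≤ a}) ∧
    (∀ f ∈ {f : MvPolynomial L K | ∃ u v : L, b ≤ u ∧ b ≤ v ∧ ¬u ≤ v ∧ ¬v ≤ u ∧
        f = X u * X v - X (u ⊔ v) * X (u ⊓ v)}, ↑f.vars ⊆ {c : L | b ≤ c}) ∧
    Disjoint {c : L | c ≤ a} {c : L | b ≤ c} := by
  classical
  have hρb : ρ b = ρ a + 1 := hcov a b hab
  -- dichotomy
  have dich : ∀ c : L, c ≤ a ∨ b ≤ c := by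
    intro c
    rcases le_or_gt (ρ c) (ρ a) with h | h
    · exact Or.inl (aux_le_a ρ hcov a ha (ρ a - ρ c) c (by omega))
    · exact Or.inr (aux_ge_b ρ hbot hcov b hb (ρ c - ρ b) c (by omega))
  refine ⟨?_, ?_, ?_, ?_⟩
  · -- span equality
    have hset : {f : MvPolynomial L K | ∃ u v : L, ¬u ≤ v ∧ ¬v ≤ u ∧
        f = X u * X v - X (u ⊔ v) * X (u ⊓ v)} =
        {f | ∃ u v : L, u ≤ a ∧ v ≤ a ∧ ¬u ≤ v ∧ ¬v ≤ u ∧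
          f = X u * X v - X (u ⊔ v) * X (u ⊓ v)} ∪
        {f | ∃ u v : L, b ≤ u ∧ b ≤ v ∧ ¬u ≤ v ∧ ¬v ≤ u ∧
          f = X u * X v - X (u ⊔ v) * X (u ⊓ v)} := by
      ext f
      constructor
      · rintro ⟨u, v, huv, hvu, rfl⟩
        rcases dich u with hu | hu
        · rcases dich v with hv | hv
          · exact Or.inl ⟨u, v, hu, hv, huv, hvu, rfl⟩
          · exact absurd (hu.trans (hab.le.trans hv)) huv
        · rcases dich v with hv | hv
          · exact absurd (hv.trans (hab.le.trans hu)) hvu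
          · exact Or.inr ⟨u, v, hu, hv, huv, hvu, rfl⟩
      · rintro (⟨u, v, _, _, huv, hvu, rfl⟩ | ⟨u, v, _, _, huv, hvu, rfl⟩) <;>
          exact ⟨u, v, huv, hvu, rfl⟩
    rw [hIL, hI1, hI2, hset, Ideal.span_union]
    rfl
  · rintro f ⟨u, v, hu, hv, _, _, rfl⟩
    intro c hc
    simp only [Finset.coe_subset, Set.mem_setOf_eq] at *
    have h1 := vars_sub_subset (p := X u * X v) (q := X (u ⊔ v) * X (u ⊓ v)) (Finset.mem_coe.mp hc)
    rcases Finset.mem_union.mp h1 with h2 | h2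
    · rcases Finset.mem_union.mp (vars_mul _ _ h2) with h3 | h3 <;>
        rw [vars_X] at h3 <;> rw [Finset.mem_singleton.mp h3]
      exacts [hu, hv]
    · rcases Finset.mem_union.mp (vars_mul _ _ h2) with h3 | h3 <;>
        rw [vars_X] at h3 <;> rw [Finset.mem_singleton.mp h3]
      exacts [sup_le hu hv, le_trans inf_le_left hu]
  · rintro f ⟨u, v, hu, hv, _, _, rfl⟩
    intro c hc
    simp only [Finset.coe_subset, Set.mem_setOf_eq] at *
    have h1 := vars_sub_subset (p := X u * X v) (q := X (u ⊔ v) * X (u ⊓ v)) (Finset.mem_coe.mp hc)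
    rcases Finset.mem_union.mp h1 with h2 | h2
    · rcases Finset.mem_union.mp (vars_mul _ _ h2) with h3 | h3 <;>
        rw [vars_X] at h3 <;> rw [Finset.mem_singleton.mp h3]
      exacts [hu, hv]
    · rcases Finset.mem_union.mp (vars_mul _ _ h2) with h3 | h3 <;>
        rw [vars_X] at h3 <;> rw [Finset.mem_singleton.mp h3]
      exacts [le_trans hu le_sup_left, le_inf hu hv]
  · rw [Set.disjoint_left]
    rintro c (hc : c ≤ a) (hbc : b ≤ c)
    exact absurd (hbc.trans hc) (not_le_of_gt hab.lt)
end

section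
/- Let C be the ideal of the polynomial ring K[C] generated by the binomials coming from a cyclic distributive lattice with r squares (a chain of r disjoint 'diamond' sublattices joined by cut edges). Then this ideal is generated by a regular sequence of r homogeneous quadrics, and hence the Castelnuovo–Mumford regularity of K[C]/I_C equals r. -/
/-- A minimal graded free resolution of the cyclic module `S/I` over the polynomial
ring `S = K[x_i]`, recorded through ranks, twists, differentials and an augmentation. -/
structure MinimalGradedFreeResolution {σ K : Type*} [Field K]
    (I : Ideal (MvPolynomial σ K)) where
  rank : ℕ → ℕ
  twist : (i : ℕ) → Fin (rank i) → ℕ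
  d : (i : ℕ) → ((Fin (rank (i + 1)) →₀ MvPolynomial σ K) →ₗ[MvPolynomial σ K]
        (Fin (rank i) →₀ MvPolynomial σ K))
  aug : (Fin (rank 0) →₀ MvPolynomial σ K) →ₗ[MvPolynomial σ K]
        (MvPolynomial σ K ⧸ I)
  rank_zero : rank 0 = 1
  twist_zero : ∀ k, twist 0 k = 0
  aug_surjective : Function.Surjective aug
  exact_zero : LinearMap.range (d 0) = LinearMap.ker aug
  exact : ∀ i, LinearMap.range (d (i + 1)) = LinearMap.ker (d i)
  graded : ∀ i (k : Fin (rank (i + 1))) (l : Fin (rank i)),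
      ∃ m, (d i (Finsupp.single k 1) l).IsHomogeneous m ∧
        twist (i + 1) k = twist i l + m
  minimal : ∀ i (k : Fin (rank (i + 1))) (l : Fin (rank i)),
      MvPolynomial.coeff 0 (d i (Finsupp.single k 1) l) = 0

/-- `S/I` has Castelnuovo–Mumford regularity `r`: in the minimal graded free
resolution the maximum of `twist - homological degree` equals `r`. -/
def HasRegularity {σ K : Type*} [Field K] (I : Ideal (MvPolynomial σ K)) (r : ℕ) : Prop :=
  ∃ F : MinimalGradedFreeResolution I,
    (∀ i (k : Fin (F.rank i)), F.twist i k ≤ i + r) ∧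
    (∃ i, ∃ k : Fin (F.rank i), F.twist i k = i + r)

open MvPolynomial

/-! Squares on pairwise distinct vertices give binomials in disjoint sets of variables. Modulo
the binomials of the earlier squares, the polynomial ring is a polynomial ring in the four
variables of the next square over a quotient of the polynomial ring in the other variables, and
there `x_b x_c - x_a x_d` is a nonzerodivisor: it is linear in `x_b`, with the nonzerodivisor
`x_c` as coefficient. So the binomials form a regular sequence of quadrics. Starting from the
polynomial ring `S` resolving itself, the mapping cone of multiplication by each successive
binomial resolves the next quotient; the result is the Koszul resolution, whose `i`-th module
is `S(-2i)^(r choose i)`, so the regularity is `max_i (2i - i) = r`. -/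

namespace MvPolynomial

variable {τ B : Type*} [CommRing B]

theorem X_mem_nonzeroDivisors (i : τ) : (X i : MvPolynomial τ B) ∈ nonZeroDivisors _ := by
  refine mem_nonZeroDivisors_iff_right.mpr fun p hp => ?_
  ext m
  rw [← coeff_mul_X m i, hp, coeff_zero, coeff_zero]

theorem X_mul_X_sub_X_mul_X_mem_nonzeroDivisors {a b c d : τ} (hba : b ≠ a) (hbc : b ≠ c)
    (hbd : b ≠ d) : (X b * X c - X a * X d : MvPolynomial τ B) ∈ nonZeroDivisors _ := by
  classical
  let e : MvPolynomial τ B ≃ₐ[B] Polynomial (MvPolynomial {x // x ≠ b} B) :=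
    (renameEquiv B (Equiv.optionSubtypeNe b).symm).trans (optionEquivLeft B _)
  have hX : ∀ x (hx : x ≠ b), e (X x) = Polynomial.C (X ⟨x, hx⟩) := fun x hx => by
    simp [e, Equiv.optionSubtypeNe_symm_of_ne hx]
  have hXb : e (X b) = Polynomial.X := by simp [e]
  have hlin : e (X b * X c - X a * X d) = Polynomial.C (X ⟨c, hbc.symm⟩) * Polynomial.X -
      Polynomial.C (X ⟨a, hba.symm⟩ * X ⟨d, hbd.symm⟩) := by
    rw [map_sub, map_mul, map_mul, hXb, hX c hbc.symm, hX a hba.symm, hX d hbd.symm,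
      Polynomial.C_mul, mul_comm Polynomial.X]
  have he : e (X b * X c - X a * X d) ∈ nonZeroDivisors _ :=
    Polynomial.mem_nonzeroDivisors_of_coeff_mem 1 (by simp [hlin, X_mem_nonzeroDivisors])
  rw [← MulEquivClass.map_nonZeroDivisors e.symm]
  exact ⟨_, he, e.symm_apply_apply _⟩

end MvPolynomial

section SplitVariables

variable {σ R : Type*} [CommRing R] (S : Set σ)

noncomputable def MvPolynomial.splitVars :
    MvPolynomial σ R ≃ₐ[R] MvPolynomial S (MvPolynomial ↥Sᶜ R) :=
  open scoped Classical in
  (renameEquiv R (Equiv.Set.sumCompl S).symm).trans (sumAlgEquiv R S ↥Sᶜ)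

namespace MvPolynomial

theorem splitVars_X_of_mem {x : σ} (hx : x ∈ S) :
    splitVars S (X x : MvPolynomial σ R) = X ⟨x, hx⟩ := by
  classical
  simp [splitVars, Equiv.Set.sumCompl_symm_apply_of_mem hx]

theorem splitVars_comp_rename_val :
    (splitVars S).toRingHom.comp (rename (R := R) (Subtype.val : ↥Sᶜ → σ)).toRingHom = C := by
  classical
  refine ringHom_ext (fun r => ?_) (fun x => ?_)
  · simp [splitVars]
  · simp [splitVars, Equiv.Set.sumCompl_symm_apply_of_notMem x.2]

theorem mem_map_rename_val_iff (J : Ideal (MvPolynomial ↥Sᶜ R)) (p : MvPolynomial σ R) :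
    p ∈ J.map (rename Subtype.val) ↔ map (Ideal.Quotient.mk J) (splitVars S p) = 0 := by
  have hmap : (J.map (rename Subtype.val)).map (splitVars S).toRingEquiv = J.map C := by
    rw [← splitVars_comp_rename_val, ← Ideal.map_map]
    rfl
  rw [← RingHom.mem_ker, ker_map, Ideal.mk_ker, ← hmap]
  exact Ideal.apply_mem_of_equiv_iff.symm

theorem span_eq_map_rename_val {T : Set (MvPolynomial σ R)}
    (hT : T ⊆ Set.range (rename (Subtype.val : ↥Sᶜ → σ))) :
    Ideal.span T =
      (Ideal.span (rename (Subtype.val : ↥Sᶜ → σ) ⁻¹' T)).map (rename (R := R) Subtype.val) := by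
  rw [Ideal.map_span, Set.image_preimage_eq_of_subset hT]

end MvPolynomial

end SplitVariables

section SquareBinomial

variable {σ R : Type*} [CommRing R]

noncomputable def squareBinomial (v : Fin 4 → σ) : MvPolynomial σ R :=
  X (v 1) * X (v 2) - X (v 0) * X (v 3)

theorem isHomogeneous_squareBinomial (v : Fin 4 → σ) :
    (squareBinomial v : MvPolynomial σ R).IsHomogeneous 2 :=
  ((isHomogeneous_X R _).mul (isHomogeneous_X R _)).sub
    ((isHomogeneous_X R _).mul (isHomogeneous_X R _))

theorem squareBinomial_mem_range_rename {T : Set σ} {v : Fin 4 → σ} (hv : ∀ l, v l ∈ T) :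
    (squareBinomial v : MvPolynomial σ R) ∈ Set.range (rename (Subtype.val : T → σ)) := by
  have hX : ∀ l, (X (v l) : MvPolynomial σ R) ∈ (rename (R := R) (Subtype.val : T → σ)).range :=
    fun l => ⟨X ⟨v l, hv l⟩, rename_X _ _⟩
  exact sub_mem (mul_mem (hX 1) (hX 2)) (mul_mem (hX 0) (hX 3))

theorem mem_of_squareBinomial_mul_mem_span {v : Fin 4 → σ} (hv : Function.Injective v)
    {T : Set (MvPolynomial σ R)}
    (hT : T ⊆ Set.range (rename (Subtype.val : ↥(Set.range v)ᶜ → σ))) {s : MvPolynomial σ R}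
    (h : squareBinomial v * s ∈ Ideal.span T) : s ∈ Ideal.span T := by
  have hne : ∀ {l l'}, l ≠ l' → (⟨v l, l, rfl⟩ : Set.range v) ≠ ⟨v l', l', rfl⟩ :=
    fun hll' h => hll' (hv (congrArg Subtype.val h))
  have hreg : map (Ideal.Quotient.mk _) (splitVars _ (squareBinomial v)) ∈
      nonZeroDivisors (MvPolynomial (Set.range v)
        (MvPolynomial ↥(Set.range v)ᶜ R ⧸ Ideal.span (rename Subtype.val ⁻¹' T))) := by
    simp only [squareBinomial, map_sub, map_mul, splitVars_X_of_mem _ (Set.mem_range_self _),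
      map_X]
    exact X_mul_X_sub_X_mul_X_mem_nonzeroDivisors (hne (by decide)) (hne (by decide))
      (hne (by decide))
  rw [span_eq_map_rename_val _ hT, mem_map_rename_val_iff] at h ⊢
  rwa [map_mul, map_mul, mul_left_mem_nonZeroDivisors_eq_zero_iff hreg] at h

theorem isWeaklyRegular_ofFn_squareBinomial {r : ℕ} (v : Fin r → Fin 4 → σ)
    (hv : Function.Injective fun p : Fin r × Fin 4 => v p.1 p.2) :
    RingTheory.Sequence.IsWeaklyRegular (MvPolynomial σ R)
      (List.ofFn fun k => (squareBinomial (v k) : MvPolynomial σ R)) := by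
  refine ⟨fun i hi => ?_⟩
  have hir : i < r := by simpa using hi
  rw [List.getElem_ofFn, Ideal.smul_eq_mul, Ideal.mul_top,
    isSMulRegular_quotient_iff_mem_of_smul_mem]
  have hvi : Function.Injective (v ⟨i, hir⟩) := hv.comp (Prod.mk_right_injective _)
  refine fun s hs => mem_of_squareBinomial_mul_mem_span hvi (fun t ht => ?_) hs
  obtain ⟨j, hj, rfl⟩ := List.mem_take_iff_getElem.mp ht
  rw [List.getElem_ofFn]
  refine squareBinomial_mem_range_rename fun l ⟨l', hl'⟩ => ?_
  have := congrArg (fun p => p.1.val) (@hv (_, l') (_, l) hl')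
  simp only at this
  omega

theorem isRegular_ofFn_squareBinomial [Nontrivial R] {r : ℕ} (v : Fin r → Fin 4 → σ)
    (hv : Function.Injective fun p : Fin r × Fin 4 => v p.1 p.2) :
    RingTheory.Sequence.IsRegular (MvPolynomial σ R)
      (List.ofFn fun k => (squareBinomial (v k) : MvPolynomial σ R)) := by
  have hle : Ideal.ofList (List.ofFn fun k => (squareBinomial (v k) : MvPolynomial σ R)) ≤
      RingHom.ker constantCoeff := Ideal.span_le.mpr fun f hf => by
    obtain ⟨k, rfl⟩ := List.mem_ofFn.mp hf
    simp [squareBinomial]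
  refine ⟨isWeaklyRegular_ofFn_squareBinomial v hv, ?_⟩
  rw [Ideal.smul_eq_mul, Ideal.mul_top]
  exact fun htop => RingHom.ker_ne_top _ (top_le_iff.mp (htop ▸ hle))

end SquareBinomial

section SplitFin

variable {R : Type*} [Semiring R] {m n : ℕ}

noncomputable def Finsupp.splitFin (m n : ℕ) :
    (Fin (m + n) →₀ R) ≃ₗ[R] (Fin m →₀ R) × (Fin n →₀ R) :=
  (Finsupp.domLCongr finSumFinEquiv.symm).trans (Finsupp.sumFinsuppLEquivProdFinsupp R)

namespace Finsupp

theorem splitFin_single_castAdd (a : Fin m) (c : R) :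
    splitFin m n (single (Fin.castAdd n a) c) = (single a c, 0) := by
  simp [splitFin]

theorem splitFin_single_natAdd (b : Fin n) (c : R) :
    splitFin m n (single (Fin.natAdd m b) c) = (0, single b c) := by
  simp [splitFin]

theorem splitFin_symm_apply_castAdd (p : (Fin m →₀ R) × (Fin n →₀ R)) (a : Fin m) :
    (splitFin m n).symm p (Fin.castAdd n a) = p.1 a := by
  simp [splitFin]

theorem splitFin_symm_apply_natAdd (p : (Fin m →₀ R) × (Fin n →₀ R)) (b : Fin n) :
    (splitFin m n).symm p (Fin.natAdd m b) = p.2 b := by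
  simp [splitFin]

end Finsupp

end SplitFin

namespace MinimalGradedFreeResolution

noncomputable section

variable {σ K : Type*} [Field K] {J : Ideal (MvPolynomial σ K)}
  (F : MinimalGradedFreeResolution J) (g : MvPolynomial σ K)

local notation "S" => MvPolynomial σ K

theorem exact_d (i : ℕ) : Function.Exact (F.d (i + 1)) (F.d i) :=
  LinearMap.exact_iff.mpr (F.exact i).symm

theorem exact_d_aug : Function.Exact (F.d 0) F.aug :=
  LinearMap.exact_iff.mpr F.exact_zero.symm

theorem isHomogeneous_d_single {e : ℕ} (htwist : ∀ i k, F.twist i k = e * i) (i : ℕ)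
    (k : Fin (F.rank (i + 1))) (l : Fin (F.rank i)) :
    (F.d i (Finsupp.single k 1) l).IsHomogeneous e := by
  obtain ⟨m, hm, hdeg⟩ := F.graded i k l
  rw [htwist, htwist, mul_add, mul_one, add_right_inj] at hdeg
  exact hdeg ▸ hm

/-- The rank of `F_{i-1}`, with `F_{-1} = 0`. It is reducible so that `Fin (F.prevRank (i + 1))`
and `Fin (F.rank i)` are interchangeable in types. -/
abbrev prevRank : ℕ → ℕ
  | 0 => 0
  | i + 1 => F.rank i

def prevD : (i : ℕ) → (Fin (F.prevRank (i + 1)) →₀ S) →ₗ[S] (Fin (F.prevRank i) →₀ S)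
  | 0 => 0
  | i + 1 => F.d i

theorem prevD_succ (i : ℕ) : F.prevD (i + 1) = F.d i := rfl

theorem prevD_d (i : ℕ) (x : Fin (F.rank (i + 1)) →₀ S) : F.prevD i (F.d i x) = 0 := by
  cases i with
  | zero => rfl
  | succ i => exact (F.exact_d i).apply_apply_eq_zero x

/-- The differential `F_{i+1} × F_i → F_i × F_{i-1}` of the mapping cone of multiplication
by `g` on `F`. -/
def coneDiff (i : ℕ) :
    ((Fin (F.rank (i + 1)) →₀ S) × (Fin (F.prevRank (i + 1)) →₀ S)) →ₗ[S]
      ((Fin (F.rank i) →₀ S) × (Fin (F.prevRank i) →₀ S)) :=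
  LinearMap.prod (F.d i ∘ₗ LinearMap.fst _ _ _ +
      g • (LinearMap.snd S _ _ : _ →ₗ[S] Fin (F.rank i) →₀ S))
    (-(F.prevD i ∘ₗ LinearMap.snd _ _ _))

theorem coneDiff_apply (i : ℕ) (x : Fin (F.rank (i + 1)) →₀ S)
    (y : Fin (F.prevRank (i + 1)) →₀ S) :
    F.coneDiff g i (x, y) = (F.d i x + g • y, -F.prevD i y) := rfl

def coneAug :
    ((Fin (F.rank 0) →₀ S) × (Fin (F.prevRank 0) →₀ S)) →ₗ[S] S ⧸ (J ⊔ Ideal.span {g}) :=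
  Submodule.factor (le_sup_left : J ≤ J ⊔ Ideal.span {g}) ∘ₗ F.aug ∘ₗ LinearMap.fst _ _ _

theorem coneAug_apply (u : Fin (F.rank 0) →₀ S) (y : Fin (F.prevRank 0) →₀ S) :
    F.coneAug g (u, y) = Submodule.factor le_sup_left (F.aug u) := rfl

theorem snd_mem_range_of_coneDiff_eq_zero (hg : IsSMulRegular (S ⧸ J) g) {i : ℕ}
    {u : Fin (F.rank (i + 1)) →₀ S} {y : Fin (F.rank i) →₀ S} (h : F.coneDiff g i (u, y) = 0) :
    y ∈ Set.range (F.d i) := by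
  rw [coneDiff_apply, Prod.mk_eq_zero, neg_eq_zero] at h
  cases i with
  | zero =>
    have haug : F.aug (F.d 0 u + g • y) = 0 := by rw [h.1, map_zero]
    rw [map_add, F.exact_d_aug.apply_apply_eq_zero, zero_add, map_smul] at haug
    exact (F.exact_d_aug y).mp (hg.right_eq_zero_of_smul haug)
  | succ i => exact (F.exact_d i y).mp h.2

theorem exact_coneDiff (hg : IsSMulRegular (S ⧸ J) g) (i : ℕ) :
    Function.Exact (F.coneDiff g (i + 1)) (F.coneDiff g i) := by
  refine LinearMap.exact_of_comp_of_mem_range ?_ ?_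
  · refine LinearMap.ext fun ⟨x, w⟩ => ?_
    rw [LinearMap.comp_apply, coneDiff_apply, coneDiff_apply]
    simp only [map_add, map_smul, map_neg, (F.exact_d i).apply_apply_eq_zero, prevD_succ,
      zero_add, smul_neg, add_neg_cancel, neg_neg, LinearMap.zero_apply]
    exact Prod.ext rfl (F.prevD_d i w)
  · rintro ⟨u, y⟩ h
    obtain ⟨w, rfl⟩ := F.snd_mem_range_of_coneDiff_eq_zero g hg h
    obtain ⟨x, hx⟩ : u + g • w ∈ Set.range (F.d (i + 1)) := by
      refine (F.exact_d i _).mp ?_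
      rw [coneDiff_apply, Prod.mk_eq_zero] at h
      rw [map_add, map_smul, h.1]
    exact ⟨(x, -w), by
      rw [coneDiff_apply, hx, smul_neg, add_neg_cancel_right, prevD_succ, map_neg, neg_neg]⟩

theorem exact_coneDiff_coneAug : Function.Exact (F.coneDiff g 0) (F.coneAug g) := by
  refine LinearMap.exact_of_comp_of_mem_range ?_ ?_
  · have hg : g ∈ Module.annihilator S (S ⧸ (J ⊔ Ideal.span {g})) := by
      rw [Ideal.annihilator_quotient]
      exact Ideal.mem_sup_right (Ideal.mem_span_singleton_self g)
    refine LinearMap.ext fun ⟨x, w⟩ => ?_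
    rw [LinearMap.comp_apply, coneDiff_apply, coneAug_apply, map_add,
      F.exact_d_aug.apply_apply_eq_zero, zero_add, map_smul, map_smul,
      Module.mem_annihilator.mp hg, LinearMap.zero_apply]
  · rintro ⟨u, y⟩ h
    obtain ⟨s, hs⟩ := Submodule.Quotient.mk_surjective _ (F.aug u)
    rw [coneAug_apply, ← hs] at h
    obtain ⟨j, hj, _, ht, rfl⟩ := Submodule.mem_sup.mp ((Submodule.Quotient.mk_eq_zero _).mp h)
    obtain ⟨t, rfl⟩ := Ideal.mem_span_singleton'.mp ht
    obtain ⟨z, hz⟩ := F.aug_surjective (Submodule.Quotient.mk t)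
    obtain ⟨x, hx⟩ : u - g • z ∈ Set.range (F.d 0) := by
      refine (F.exact_d_aug _).mp ?_
      rw [map_sub, map_smul, hz, ← hs, ← Submodule.Quotient.mk_smul, ← Submodule.Quotient.mk_sub,
        smul_eq_mul, mul_comm, add_sub_cancel_right, Submodule.Quotient.mk_eq_zero]
      exact hj
    refine ⟨(x, z), Prod.ext ?_ (Subsingleton.elim _ _)⟩
    rw [coneDiff_apply, hx, sub_add_cancel]

theorem coneAug_surjective : Function.Surjective (F.coneAug g) := by
  intro q
  obtain ⟨s, rfl⟩ := Submodule.Quotient.mk_surjective _ q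
  obtain ⟨z, hz⟩ := F.aug_surjective (Submodule.Quotient.mk s)
  exact ⟨(z, 0), by simp [coneAug, hz]⟩

open Finsupp in
theorem isHomogeneous_coneDiff_single {e : ℕ} (htwist : ∀ i k, F.twist i k = e * i)
    (hg : g.IsHomogeneous e) (i : ℕ) (k : Fin (F.rank (i + 1) + F.prevRank (i + 1)))
    (l : Fin (F.rank i + F.prevRank i)) :
    ((splitFin _ _).symm (F.coneDiff g i (splitFin _ _ (single k 1))) l).IsHomogeneous e := by
  refine Fin.addCases (fun a => ?_) (fun b => ?_) k <;>
    [rw [splitFin_single_castAdd]; rw [splitFin_single_natAdd]] <;>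
    rw [coneDiff_apply] <;>
    refine Fin.addCases (fun a' => ?_) (fun b' => ?_) l <;>
    simp only [splitFin_symm_apply_castAdd, splitFin_symm_apply_natAdd]
  · simpa using F.isHomogeneous_d_single htwist i a a'
  · simpa using isHomogeneous_zero _ _ _
  · rw [map_zero, zero_add, Finsupp.smul_apply, single_apply]
    split_ifs
    · rwa [smul_eq_mul, mul_one]
    · rw [smul_zero]
      exact isHomogeneous_zero _ _ _
  · cases i with
    | zero => exact b'.elim0
    | succ i => exact (F.isHomogeneous_d_single htwist i b b').neg

open Finsupp in
def cone {e : ℕ} (he : e ≠ 0) (htwist : ∀ i k, F.twist i k = e * i) (hg : g.IsHomogeneous e)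
    (hreg : IsSMulRegular (S ⧸ J) g) : MinimalGradedFreeResolution (J ⊔ Ideal.span {g}) where
  rank i := F.rank i + F.prevRank i
  twist i _ := e * i
  d i := (splitFin _ _).symm.toLinearMap ∘ₗ F.coneDiff g i ∘ₗ (splitFin _ _).toLinearMap
  aug := F.coneAug g ∘ₗ (splitFin _ _).toLinearMap
  rank_zero := F.rank_zero
  twist_zero _ := mul_zero e
  aug_surjective := (F.coneAug_surjective g).comp (splitFin _ _).surjective
  exact_zero := by
    refine (LinearMap.exact_iff.mp ?_).symm
    rw [← LinearMap.comp_assoc, LinearEquiv.precomp_exact_iff_exact,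
      LinearEquiv.conj_symm_exact_iff_exact]
    exact F.exact_coneDiff_coneAug g
  exact i := by
    refine (LinearMap.exact_iff.mp ?_).symm
    rw [← LinearMap.comp_assoc, LinearEquiv.precomp_exact_iff_exact,
      LinearEquiv.postcomp_exact_iff_exact, LinearEquiv.conj_symm_exact_iff_exact]
    exact F.exact_coneDiff g hreg i
  graded i k l := ⟨e, F.isHomogeneous_coneDiff_single g htwist hg i k l, by ring⟩
  minimal i k l :=
    (F.isHomogeneous_coneDiff_single g htwist hg i k l).coeff_eq_zero (by simpa using he.symm)

def bot : MinimalGradedFreeResolution (⊥ : Ideal S) where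
  rank
    | 0 => 1
    | _ + 1 => 0
  twist _ _ := 0
  d _ := 0
  aug := (⊥ : Ideal S).mkQ ∘ₗ Finsupp.lapply 0
  rank_zero := rfl
  twist_zero _ := rfl
  aug_surjective := (Submodule.mkQ_surjective _).comp fun s => ⟨Finsupp.single 0 s, by simp⟩
  exact_zero := by
    rw [LinearMap.range_zero, eq_comm, LinearMap.ker_eq_bot]
    exact (LinearMap.ker_eq_bot.mp (Submodule.ker_mkQ _)).comp fun _ _ h => Finsupp.unique_ext h
  exact _ := Subsingleton.elim _ _
  graded _ k := k.elim0
  minimal _ k := k.elim0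

theorem exists_of_isWeaklyRegular {e : ℕ} (he : e ≠ 0) (rs : List S)
    (hrs : RingTheory.Sequence.IsWeaklyRegular S rs) (hhom : ∀ f ∈ rs, f.IsHomogeneous e) :
    ∃ F : MinimalGradedFreeResolution (Ideal.ofList rs),
      (∀ i, F.rank i = rs.length.choose i) ∧ ∀ i k, F.twist i k = e * i := by
  induction rs using List.reverseRecOn with
  | nil =>
    rw [Ideal.ofList_nil]
    refine ⟨bot, fun i => ?_, fun i k => ?_⟩ <;> cases i
    exacts [rfl, rfl, rfl, k.elim0]
  | append_singleton rs g ih =>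
    rw [RingTheory.Sequence.isWeaklyRegular_append_iff,
      RingTheory.Sequence.isWeaklyRegular_singleton_iff, Ideal.smul_eq_mul, Ideal.mul_top] at hrs
    obtain ⟨F, hrank, htwist⟩ := ih hrs.1 fun f hf => hhom f (by simp [hf])
    rw [Ideal.ofList_append, Ideal.ofList_singleton]
    refine ⟨F.cone g he htwist (hhom g (by simp)) hrs.2, fun i => ?_, fun _ _ => rfl⟩
    cases i with
    | zero => simp [cone, hrank]
    | succ i => simp [cone, hrank, Nat.choose_succ_succ', add_comm]

theorem hasRegularity {n e : ℕ} (he : e ≠ 0) (hrank : ∀ i, F.rank i = n.choose i)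
    (htwist : ∀ i k, F.twist i k = e * i) : HasRegularity J ((e - 1) * n) := by
  obtain ⟨e, rfl⟩ := Nat.exists_eq_succ_of_ne_zero he
  refine ⟨F, fun i k => ?_, n, ⟨0, by simp [hrank]⟩, by rw [htwist]; simp; ring⟩
  have hi : i ≤ n := by
    by_contra! hni
    exact (Nat.choose_eq_zero_of_lt hni ▸ hrank i ▸ k).elim0
  rw [htwist]
  simp only [Nat.succ_sub_one]
  nlinarith

end

end MinimalGradedFreeResolution

/-- The join-meet ideal of a cyclic distributive lattice with `r` squares
(squares `a → b → d`, `a → c → d` with `b, c` incomparable, on pairwise distinct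
vertices; here `v k 0, v k 1, v k 2, v k 3` are `a, b, c, d` of the `k`-th square) is
generated by the `r` binomials `x_b x_c - x_a x_d`, which are homogeneous quadrics
forming a regular sequence; hence the regularity of `K[C]/I_C` equals `r`. -/
theorem stmt4 {σ K : Type*} [Field K] (r : ℕ) (v : Fin r → Fin 4 → σ)
    (hinj : Function.Injective (fun p : Fin r × Fin 4 => v p.1 p.2))
    (I : Ideal (MvPolynomial σ K))
    (hI : I = Ideal.span {f | ∃ k : Fin r,
      f = X (v k 1) * X (v k 2) - X (v k 0) * X (v k 3)}) :
    (∀ k : Fin r,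
      (X (v k 1) * X (v k 2) - X (v k 0) * X (v k 3) : MvPolynomial σ K).IsHomogeneous 2) ∧
    RingTheory.Sequence.IsRegular (MvPolynomial σ K)
      (List.ofFn (fun k : Fin r =>
        X (v k 1) * X (v k 2) - X (v k 0) * X (v k 3) : Fin r → MvPolynomial σ K)) ∧
    HasRegularity I r := by
  have hreg := isRegular_ofFn_squareBinomial (R := K) v hinj
  have hI' : I = Ideal.ofList (List.ofFn fun k => squareBinomial (v k)) := by
    rw [hI]
    congr 1
    ext f
    simp [List.mem_ofFn, squareBinomial, eq_comm]
  obtain ⟨F, hrank, htwist⟩ := MinimalGradedFreeResolution.exists_of_isWeaklyRegular two_ne_zero _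
    hreg.toIsWeaklyRegular (by simp [List.mem_ofFn, isHomogeneous_squareBinomial])
  refine ⟨fun k => isHomogeneous_squareBinomial (v k), hreg, ?_⟩
  rw [hI']
  simpa using F.hasRegularity two_ne_zero hrank htwist
end

section
/- Let P be a finite poset and Q = {p_1, …, p_r} a maximal antichain in P. Then there exists a partial order ⪯ on the underlying set of P extending ≤ (p ≤ q implies p ⪯ q) such that the elements of Q remain pairwise incomparable in ⪯, and P decomposes as a linear order P', followed by the antichain Q, followed by a linear order P'' (i.e., ⪯ is the ordinal sum P' ⊕ Q ⊕ P''). -/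
/-- Let `P` be a finite poset and `Q` a maximal antichain in `P`. Then
there is a partial order `⪯` on the underlying set of `P` extending `≤`, in which the
elements of `Q` remain pairwise incomparable, `P' = {p | p < some element of Q}` and
`P'' = {p | p > some element of Q}` become linearly ordered, every element of `P'` lies
below every element of `Q`, every element of `Q` lies below every element of `P''`, and
every element of `P'` lies below every element of `P''`; i.e. `⪯` is the ordinal sum
`P' ⊕ Q ⊕ P''`. -/
theorem stmt17 {P : Type*} [Fintype P] [PartialOrder P] (Q : Set P)
    (hanti : ∀ a ∈ Q, ∀ b ∈ Q, a ≠ b → ¬a ≤ b)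
    (hmax : ∀ p : P, p ∉ Q → ∃ q ∈ Q, p < q ∨ q < p) :
    ∃ le' : P → P → Prop, IsPartialOrder P le' ∧
      (∀ a b : P, a ≤ b → le' a b) ∧
      (∀ a ∈ Q, ∀ b ∈ Q, a ≠ b → ¬le' a b) ∧
      (∀ a b : P, (∃ q ∈ Q, a < q) → (∃ q ∈ Q, b < q) → le' a b ∨ le' b a) ∧
      (∀ a b : P, (∃ q ∈ Q, q < a) → (∃ q ∈ Q, q < b) → le' a b ∨ le' b a) ∧
      (∀ a : P, (∃ q ∈ Q, a < q) → ∀ b ∈ Q, le' a b) ∧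
      (∀ b : P, (∃ q ∈ Q, q < b) → ∀ a ∈ Q, le' a b) ∧
      (∀ a b : P, (∃ q ∈ Q, a < q) → (∃ q ∈ Q, q < b) → le' a b) := by
  classical
  obtain ⟨s, hs, hrs⟩ := extend_partialOrder ((· ≤ ·) : P → P → Prop)
  haveI : IsLinearOrder P s := hs
  set A : P → Prop := fun p => ∃ q ∈ Q, p < q with hA
  set B : P → Prop := fun p => ∃ q ∈ Q, q < p with hB
  have hAQ : ∀ p, A p → p ∉ Q := by
    rintro p ⟨q, hq, hpq⟩ hp
    exact hanti p hp q hq (ne_of_lt hpq) hpq.le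
  have hBQ : ∀ p, B p → p ∉ Q := by
    rintro p ⟨q, hq, hqp⟩ hp
    exact hanti q hq p hp (ne_of_lt hqp) hqp.le
  have hABf : ∀ p, A p → B p → False := by
    rintro p ⟨q, hq, hpq⟩ ⟨q', hq', hq'p⟩
    exact hanti q' hq' q hq (ne_of_lt (hq'p.trans hpq)) (hq'p.trans hpq).le
  let rk : P → ℕ := fun p => if A p then 0 else if p ∈ Q then 1 else 2
  have rk0 : ∀ p, A p → rk p = 0 := fun p h => if_pos h
  have rk1 : ∀ p, p ∈ Q → rk p = 1 := by
    intro p h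
    have : ¬ A p := fun ha => hAQ p ha h
    simp [rk, this, h]
  have rk2 : ∀ p, B p → rk p = 2 := by
    intro p h
    have h1 : ¬ A p := fun ha => hABf p ha h
    have h2 : p ∉ Q := hBQ p h
    simp [rk, h1, h2]
  have hrk1 : ∀ p, rk p = 1 → p ∈ Q := by
    intro p h
    by_contra hp
    by_cases ha : A p
    · simp [rk, ha] at h
    · simp [rk, ha, hp] at h
  have hrk0 : ∀ p, rk p = 0 → A p := by
    intro p h
    by_contra ha
    by_cases hq : p ∈ Q <;> simp [rk, ha, hq] at h
  have hlt : ∀ a b : P, a < b → rk a ≤ rk b := by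
    intro a b hab
    by_cases hb : A b
    · obtain ⟨q, hq, hbq⟩ := hb
      have : A a := ⟨q, hq, hab.trans hbq⟩
      simp [rk0 a this]
    · by_cases hbQ : b ∈ Q
      · have : A a := ⟨b, hbQ, hab⟩
        rw [rk0 a this]; omega
      · have : rk b = 2 := by simp [rk, hb, hbQ]
        rw [this]
        have : rk a ≤ 2 := by
          by_cases h1 : A a
          · simp [rk, h1]
          · by_cases h2 : a ∈ Q <;> simp [rk, h1, h2]
        exact this
  set le' : P → P → Prop :=
    fun a b => rk a < rk b ∨ (rk a = rk b ∧ ((a ∈ Q ∧ a = b) ∨ (a ∉ Q ∧ s a b))) with hle'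
  have hrefl : ∀ a, le' a a := by
    intro a
    by_cases ha : a ∈ Q
    · exact Or.inr ⟨rfl, Or.inl ⟨ha, rfl⟩⟩
    · exact Or.inr ⟨rfl, Or.inr ⟨ha, refl_of s a⟩⟩
  have htrans : ∀ a b c, le' a b → le' b c → le' a c := by
    rintro a b c (h1 | ⟨h1, h1'⟩) (h2 | ⟨h2, h2'⟩)
    · exact Or.inl (h1.trans h2)
    · exact Or.inl (h2 ▸ h1)
    · exact Or.inl (h1 ▸ h2)
    · refine Or.inr ⟨h1.trans h2, ?_⟩
      rcases h1' with ⟨haQ, rfl⟩ | ⟨haQ, hab⟩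
      · exact h2'
      · rcases h2' with ⟨hbQ, rfl⟩ | ⟨hbQ, hbc⟩
        · exact absurd (hrk1 a (h1.trans (rk1 b hbQ))) haQ
        · exact Or.inr ⟨haQ, trans_of s hab hbc⟩
  have hanti' : ∀ a b, le' a b → le' b a → a = b := by
    rintro a b (h1 | ⟨h1, h1'⟩) (h2 | ⟨h2, h2'⟩)
    · omega
    · omega
    · omega
    · rcases h1' with ⟨_, rfl⟩ | ⟨haQ, hab⟩
      · rfl
      · rcases h2' with ⟨hbQ, rfl⟩ | ⟨_, hba⟩
        · rfl
        · exact antisymm_of s hab hba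
  haveI hR : IsRefl P le' := ⟨hrefl⟩
  haveI hT : IsTrans P le' := ⟨htrans⟩
  haveI hPre : IsPreorder P le' := ⟨⟩
  haveI hAs : IsAntisymm P le' := ⟨hanti'⟩
  refine ⟨le', ⟨⟩, ?_, ?_, ?_, ?_, ?_, ?_, ?_⟩
  · -- extends ≤
    intro a b hab
    rcases eq_or_lt_of_le hab with rfl | hab'
    · exact hrefl a
    · rcases lt_or_eq_of_le (hlt a b hab') with h | h
      · exact Or.inl h
      · refine Or.inr ⟨h, Or.inr ⟨?_, hrs a b hab⟩⟩
        intro haQ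
        have hbQ : b ∈ Q := hrk1 b (h ▸ rk1 a haQ)
        exact hanti a haQ b hbQ (ne_of_lt hab') hab
  · -- antichain preserved
    rintro a ha b hb hne (h | ⟨h, h'⟩)
    · rw [rk1 a ha, rk1 b hb] at h; omega
    · rcases h' with ⟨_, rfl⟩ | ⟨haQ, _⟩
      · exact hne rfl
      · exact haQ ha
  · -- P' linear
    intro a b ha hb
    have h1 := rk0 a ha
    have h2 := rk0 b hb
    rcases total_of s a b with h | h
    · exact Or.inl (Or.inr ⟨by omega, Or.inr ⟨hAQ a ha, h⟩⟩)
    · exact Or.inr (Or.inr ⟨by omega, Or.inr ⟨hAQ b hb, h⟩⟩)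
  · -- P'' linear
    intro a b ha hb
    have h1 := rk2 a ha
    have h2 := rk2 b hb
    rcases total_of s a b with h | h
    · exact Or.inl (Or.inr ⟨by omega, Or.inr ⟨hBQ a ha, h⟩⟩)
    · exact Or.inr (Or.inr ⟨by omega, Or.inr ⟨hBQ b hb, h⟩⟩)
  · -- P' below Q
    intro a ha b hb
    exact Or.inl (by rw [rk0 a ha, rk1 b hb]; omega)
  · -- Q below P''
    intro b hb a ha
    exact Or.inl (by rw [rk1 a ha, rk2 b hb]; omega)
  · -- P' below P''
    intro a b ha hb
    exact Or.inl (by rw [rk0 a ha, rk2 b hb]; omega)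
end
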